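/- Let S ⊆ ℕ^d be a C-semigroup, let h ∈ Maximals_{≤_{C(S)}} H(S), and let x ∈ S be nonzero (in particular x may be any minimal extremal ray of S). Then h + x ∈ 𝔠_S ∩ Maximals_{≤_S} Ap(S,{x}); in particular, if H(S) ≠ ∅ then |𝔠_S ∩ Maximals_{≤_S} Ap(S,{x})| ≥ 1. -/

import Mathlib

/-! Common definitions for C-semigroups in `ℕ^d = Fin d → ℕ`. -/

/-- `x ≤_L y` iff `y = x + l` for some `l ∈ L`. -/
def leL {M : Type*} [AddCommMonoid M] (L : Set M) (x y : M) : Prop :=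
  ∃ l ∈ L, y = x + l

/-- Elements of `A` maximal with respect to `≤_L`. -/
def maximalsL {M : Type*} [AddCommMonoid M] (L A : Set M) : Set M :=
  {a | a ∈ A ∧ ∀ b ∈ A, leL L a b → a = b}

/-- The Apéry set of `S` with respect to `X`. -/
def aperySet {M : Type*} [AddCommMonoid M] (S : AddSubmonoid M) (X : Set M) : Set M :=
  {s | s ∈ S ∧ ¬ ∃ x ∈ X, ∃ t ∈ S, s = t + x}

/-- Integer points of the rational cone spanned by `S`. -/
def coneSet {d : ℕ} (S : AddSubmonoid (Fin d → ℕ)) : Set (Fin d → ℕ) :=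
  {x | ∃ (n : ℕ) (c : Fin n → ℚ) (s : Fin n → (Fin d → ℕ)),
      (∀ i, 0 ≤ c i) ∧ (∀ i, s i ∈ S) ∧ ∀ j, (x j : ℚ) = ∑ i, c i * (s i j : ℚ)}

/-- The set of gaps `H(S) = C(S) \ S`. -/
def gapSet {d : ℕ} (S : AddSubmonoid (Fin d → ℕ)) : Set (Fin d → ℕ) :=
  coneSet S \ (S : Set (Fin d → ℕ))

/-- Pseudo-Frobenius elements of `S`. -/
def pseudoFrobenius {d : ℕ} (S : AddSubmonoid (Fin d → ℕ)) : Set (Fin d → ℕ) :=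
  {h | h ∈ gapSet S ∧ ∀ s ∈ S, s ≠ 0 → h + s ∈ S}

/-- Special gaps of `S`. -/
def specialGaps {d : ℕ} (S : AddSubmonoid (Fin d → ℕ)) : Set (Fin d → ℕ) :=
  {h | h ∈ pseudoFrobenius S ∧ h + h ∈ S}

/-- The conductor of `S`. -/
def conductorSet {d : ℕ} (S : AddSubmonoid (Fin d → ℕ)) : Set (Fin d → ℕ) :=
  {s | s ∈ S ∧ ∀ c ∈ coneSet S, s + c ∈ S}

/-- A relaxed monomial order on `ℕ^d`. -/
structure RelaxedMonomialOrder (d : ℕ) where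
  le : (Fin d → ℕ) → (Fin d → ℕ) → Prop
  isLinearOrder : IsLinearOrder (Fin d → ℕ) le
  zero_le : ∀ v, le 0 v
  le_add_right : ∀ u v w, le u v → le u (v + w)

/-- A term order on `ℕ^d`. -/
structure TermOrderOn (d : ℕ) where
  le : (Fin d → ℕ) → (Fin d → ℕ) → Prop
  isLinearOrder : IsLinearOrder (Fin d → ℕ) le
  zero_le : ∀ v, le 0 v
  add_le_add_right : ∀ u v w, le u v → le (u + w) (v + w)

/-- Frobenius allowable elements of a C-semigroup `S`. -/
def frobAllowable {d : ℕ} (S : AddSubmonoid (Fin d → ℕ)) : Set (Fin d → ℕ) :=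
  {h | h ∈ gapSet S ∧ ∃ o : RelaxedMonomialOrder d, ∀ x ∈ gapSet S, o.le x h}

/-- Pseudo-Frobenius elements, complement version (for generalized numerical semigroups). -/
def PFmonoid {M : Type*} [AddCommMonoid M] (S : AddSubmonoid M) : Set M :=
  {h | h ∉ S ∧ ∀ s ∈ S, s ≠ 0 → h + s ∈ S}

/-- Conductor, complement version (for generalized numerical semigroups). -/
def conductorMonoid {M : Type*} [AddCommMonoid M] (S : AddSubmonoid M) : Set M :=
  {s | s ∈ S ∧ ∀ n : M, s + n ∈ S}

/-- Frobenius allowable elements, complement version (for generalized numerical semigroups). -/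
def FAmonoid {d : ℕ} (S : AddSubmonoid (Fin d → ℕ)) : Set (Fin d → ℕ) :=
  {h | h ∉ S ∧ ∃ o : RelaxedMonomialOrder d, ∀ x, x ∉ S → o.le x h}

section Stmt10Aux

variable {d : ℕ} {S : AddSubmonoid (Fin d → ℕ)}

private lemma mem_coneSet_of_mem {s : Fin d → ℕ} (hs : s ∈ S) : s ∈ coneSet S := by
  refine ⟨1, fun _ => 1, fun _ => s, fun _ => zero_le_one, fun _ => hs, fun j => ?_⟩
  simp

private lemma coneSet_add {u v : Fin d → ℕ} (hu : u ∈ coneSet S) (hv : v ∈ coneSet S) :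
    u + v ∈ coneSet S := by
  obtain ⟨n, c, s, hc, hsS, hrep⟩ := hu
  obtain ⟨m, c', s', hc', hsS', hrep'⟩ := hv
  refine ⟨n + m, Fin.append c c', Fin.append s s', fun i => ?_, fun i => ?_, fun j => ?_⟩
  · exact Fin.addCases (fun i => by simpa using hc i) (fun i => by simpa using hc' i) i
  · exact Fin.addCases (fun i => by simpa using hsS i) (fun i => by simpa using hsS' i) i
  · have h1 : ((u + v) j : ℚ) = (u j : ℚ) + (v j : ℚ) := by
      simp [Pi.add_apply]
    rw [h1, hrep j, hrep' j, Fin.sum_univ_add]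
    simp

private lemma mem_coneSet_of_nsmul {g : Fin d → ℕ} {m : ℕ}
    (hm : m ≠ 0) (h : m • g ∈ S) : g ∈ coneSet S := by
  have hm' : (m : ℚ) ≠ 0 := Nat.cast_ne_zero.mpr hm
  refine ⟨1, fun _ => 1 / (m : ℚ), fun _ => m • g, fun _ => by positivity,
    fun _ => h, fun j => ?_⟩
  have h2 : ((m • g) j : ℚ) = (m : ℚ) * (g j : ℚ) := by
    simp [Pi.smul_apply]
  rw [Fin.sum_univ_one, h2]
  field_simp

private lemma exists_rep (P : Finset (Fin d → ℕ)) {s : Fin d → ℕ}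
    (hs : s ∈ AddSubmonoid.closure (P : Set (Fin d → ℕ))) :
    ∃ f : (Fin d → ℕ) → ℕ, s = ∑ b ∈ P, f b • b := by
  refine AddSubmonoid.closure_induction ?_ ?_ ?_ hs
  · intro b hb
    refine ⟨fun a => if a = b then 1 else 0, ?_⟩
    simp only [ite_smul, one_smul, zero_smul]
    rw [Finset.sum_ite_eq' P b (fun a => a)]
    simp [Finset.mem_coe.mp hb]
  · exact ⟨fun _ => 0, by simp⟩
  · rintro u v hu hv ⟨f, hf⟩ ⟨f', hf'⟩
    refine ⟨f + f', ?_⟩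
    rw [hf, hf', ← Finset.sum_add_distrib]
    exact Finset.sum_congr rfl fun b _ => by rw [Pi.add_apply, add_smul]

private lemma pf_mem_coneSet (hfg : S.FG)
    {g a : Fin d → ℕ} (haS : a ∈ S) (ha0 : a ≠ 0)
    (hpf : ∀ s ∈ S, s ≠ 0 → g + s ∈ S) : g ∈ coneSet S := by
  obtain ⟨P, hP⟩ := hfg
  have key : ∀ k : ℕ, k • g + a ∈ S ∧ k • g + a ≠ 0 := by
    intro k
    induction k with
    | zero => simpa using ⟨haS, ha0⟩
    | succ k ih =>
      have h1 : (k + 1) • g + a = g + (k • g + a) := by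
        rw [succ_nsmul]; abel
      refine ⟨by rw [h1]; exact hpf _ ih.1 ih.2, ?_⟩
      obtain ⟨j, hj⟩ := Function.ne_iff.mp ha0
      intro h0
      have h2 := congrFun h0 j
      simp only [Pi.add_apply, Pi.smul_apply, smul_eq_mul, Pi.zero_apply] at h2
      simp only [Pi.zero_apply] at hj
      omega
  choose F hF using fun k => exists_rep P (by rw [hP]; exact (key k).1)
  have hpwo : WellQuasiOrdered (α := ↥P → ℕ) (· ≤ ·) := wellQuasiOrdered_le
  obtain ⟨i, j, hij, hle⟩ := hpwo (fun k b => F k b.1)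
  have hFle : ∀ b ∈ P, F i b ≤ F j b := fun b hb => hle ⟨b, hb⟩
  have hsum : (∑ b ∈ P, F j b • b) = (∑ b ∈ P, F i b • b) + ∑ b ∈ P, (F j b - F i b) • b := by
    rw [← Finset.sum_add_distrib]
    refine Finset.sum_congr rfl fun b hb => ?_
    rw [← add_smul]
    congr 1
    have := hFle b hb
    omega
  have hmem : (∑ b ∈ P, (F j b - F i b) • b) ∈ S := by
    refine sum_mem fun b hb => ?_
    have hbS : b ∈ S := by rw [← hP]; exact AddSubmonoid.subset_closure hb
    exact nsmul_mem hbS _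
  have e1 : j • g + a = (i • g + a) + ∑ b ∈ P, (F j b - F i b) • b := by
    rw [hF j, hsum, ← hF i]
  have e2 : j • g + a = (i • g + a) + (j - i) • g := by
    have h3 : i + (j - i) = j := by omega
    calc j • g + a = (i + (j - i)) • g + a := by rw [h3]
      _ = (i • g + a) + (j - i) • g := by rw [add_nsmul]; abel
  have hcancel : (j - i) • g = ∑ b ∈ P, (F j b - F i b) • b :=
    add_left_cancel (e2.symm.trans e1)
  exact mem_coneSet_of_nsmul (by omega : j - i ≠ 0) (hcancel ▸ hmem)

end Stmt10Aux

/-- For a C-semigroup `S`, a maximal gap `h` (w.r.t. `≤_{C(S)}`) and a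
nonzero `x ∈ S`, `h + x ∈ 𝔠_S ∩ Maximals_{≤_S} Ap(S,{x})`; in particular this
intersection is nonempty whenever `H(S) ≠ ∅`. -/
theorem stmt10 {d : ℕ} (hd : 0 < d) (S : AddSubmonoid (Fin d → ℕ)) (hfg : S.FG)
    (hfin : (gapSet S).Finite)
    (x : Fin d → ℕ) (hx : x ∈ S) (hx0 : x ≠ 0) :
    (∀ h ∈ maximalsL (coneSet S) (gapSet S),
      h + x ∈ conductorSet S ∩ maximalsL (S : Set (Fin d → ℕ)) (aperySet S {x})) ∧
    ((gapSet S).Nonempty →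
      1 ≤ (conductorSet S ∩ maximalsL (S : Set (Fin d → ℕ)) (aperySet S {x})).ncard) := by
  have part1 : ∀ h ∈ maximalsL (coneSet S) (gapSet S),
      h + x ∈ conductorSet S ∩ maximalsL (S : Set (Fin d → ℕ)) (aperySet S {x}) := by
    rintro h ⟨⟨hC, hS⟩, hmax⟩
    have hhx : h + x ∈ S := by
      by_contra hn
      have hg : h + x ∈ gapSet S := ⟨coneSet_add hC (mem_coneSet_of_mem hx), hn⟩
      have he := hmax _ hg ⟨x, mem_coneSet_of_mem hx, rfl⟩
      exact hx0 (left_eq_add.mp he)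
    have hcond : h + x ∈ conductorSet S := by
      refine ⟨hhx, fun u hu => ?_⟩
      by_cases huS : h + u ∈ S
      · have h4 : h + x + u = h + u + x := by abel
        rw [h4]; exact S.add_mem huS hx
      · have hg : h + u ∈ gapSet S := ⟨coneSet_add hC hu, huS⟩
        have he := hmax _ hg ⟨u, hu, rfl⟩
        have hu0 : u = 0 := left_eq_add.mp he
        simpa [hu0] using hhx
    have hap : h + x ∈ aperySet S {x} := by
      refine ⟨hhx, ?_⟩
      rintro ⟨x', hx', t, ht, hteq⟩
      rcases Set.mem_singleton_iff.mp hx' with rfl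
      exact hS ((add_right_cancel hteq : h = t) ▸ ht)
    refine ⟨hcond, hap, ?_⟩
    rintro b hb ⟨s, hsS, rfl⟩
    by_cases hs0 : s = 0
    · simp [hs0]
    · by_cases hhsS : h + s ∈ S
      · exact absurd ⟨x, rfl, h + s, hhsS, by abel⟩ hb.2
      · have hg : h + s ∈ gapSet S := ⟨coneSet_add hC (mem_coneSet_of_mem hsS), hhsS⟩
        have he := hmax _ hg ⟨s, mem_coneSet_of_mem hsS, rfl⟩
        exact absurd (left_eq_add.mp he) hs0
  refine ⟨part1, fun hne => ?_⟩
  -- a maximal gap exists: take one with maximal coordinate sum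
  obtain ⟨h, hhH, hmaxsum⟩ :=
    Set.Finite.exists_maximalFor (fun v => ∑ j, v j) _ hfin hne
  have hmem : h ∈ maximalsL (coneSet S) (gapSet S) := by
    refine ⟨hhH, ?_⟩
    rintro b hb ⟨l, _, rfl⟩
    have hsum : (∑ j, h j) ≤ ∑ j, (h + l) j := by
      simp only [Pi.add_apply, Finset.sum_add_distrib]
      exact Nat.le_add_right _ _
    have heq := hmaxsum hb hsum
    simp only [Pi.add_apply, Finset.sum_add_distrib] at heq
    have hl0 : ∀ j, l j = 0 := by
      have hz : (∑ j, l j) = 0 := by omega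
      intro j
      exact (Finset.sum_eq_zero_iff.mp hz) j (Finset.mem_univ j)
    have : l = 0 := funext hl0
    simp [this]
  have hTne : h + x ∈ conductorSet S ∩ maximalsL (S : Set (Fin d → ℕ)) (aperySet S {x}) :=
    part1 h hmem
  have hTsub : conductorSet S ∩ maximalsL (S : Set (Fin d → ℕ)) (aperySet S {x}) ⊆
      ((· + x) '' gapSet S) ∪ Set.Icc 0 x := by
    rintro c ⟨⟨hcS, hccond⟩, ⟨⟨-, hcapn⟩, hcmax⟩⟩
    have hkey : ∀ s ∈ S, s ≠ 0 → ∃ t ∈ S, c + s = t + x := by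
      intro s hs hs0
      by_cases hb : c + s ∈ aperySet S {x}
      · exact absurd (left_eq_add.mp (hcmax _ hb ⟨s, hs, rfl⟩)) hs0
      · have hcsS : c + s ∈ S := S.add_mem hcS hs
        simp only [aperySet, Set.mem_setOf_eq, not_and, not_not] at hb
        obtain ⟨x', hx', t, ht, he⟩ := hb hcsS
        rcases Set.mem_singleton_iff.mp hx' with rfl
        exact ⟨t, ht, he⟩
    have hc0 : c ≠ 0 := by
      rintro rfl
      obtain ⟨w, hwC, hwS⟩ := hne
      exact hwS (by simpa using hccond w hwC)
    by_cases hxc : x ≤ c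
    · left
      have hgx : (c - x) + x = c := tsub_add_cancel_of_le hxc
      have hgS : c - x ∉ S := fun hgs => hcapn ⟨x, rfl, c - x, hgs, hgx.symm⟩
      have hpf : ∀ s ∈ S, s ≠ 0 → (c - x) + s ∈ S := by
        intro s hs hs0
        obtain ⟨t, ht, he⟩ := hkey s hs hs0
        have h5 : (c - x) + s + x = t + x := by
          rw [add_right_comm, hgx, he]
        have h6 : (c - x) + s = t := add_right_cancel h5
        rw [h6]; exact ht
      have hgcone : c - x ∈ coneSet S := pf_mem_coneSet hfg hcS hc0 hpf
      exact ⟨c - x, ⟨hgcone, hgS⟩, hgx⟩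
    · right
      obtain ⟨j, hj⟩ : ∃ j, c j < x j := by
        by_contra hcon
        push_neg at hcon
        exact hxc fun j => hcon j
      have descent : ∀ n : ℕ, ∀ u, u ∈ S → u ≠ 0 → u j ≤ n → ∃ v ∈ S, x = c + v := by
        intro n
        induction n with
        | zero =>
          intro u hu hu0 huj
          obtain ⟨t, ht, he⟩ := hkey u hu hu0
          have h7 := congrFun he j
          simp only [Pi.add_apply] at h7
          omega
        | succ n ih =>
          intro u hu hu0 huj
          obtain ⟨t, ht, he⟩ := hkey u hu hu0
          by_cases ht0 : t = 0
          · refine ⟨u, hu, ?_⟩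
            rw [ht0] at he
            simpa using he.symm
          · have h7 := congrFun he j
            simp only [Pi.add_apply] at h7
            exact ih t ht ht0 (by omega)
      obtain ⟨v, _, hxv⟩ := descent (c j) c hcS hc0 le_rfl
      refine Set.mem_Icc.mpr ⟨fun j' => Nat.zero_le _, fun j' => ?_⟩
      have h8 := congrFun hxv j'
      simp only [Pi.add_apply] at h8
      exact h8.symm ▸ Nat.le_add_right (c j') (v j')
  have hTfin : (conductorSet S ∩ maximalsL (S : Set (Fin d → ℕ)) (aperySet S {x})).Finite :=
    ((hfin.image _).union (Set.finite_Icc 0 x)).subset hTsub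
  have hpos := (Set.ncard_pos hTfin).mpr ⟨h + x, hTne⟩
  omega
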